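/- arXiv:1903.03677 — 3 statements merged into one kernel-verified Lean document; each statement's English description precedes it below -/
import Mathlib

section
/- Let U ⊆ ℝ² be open and connected, and let φ, φ̃ : U → ℝ³ be smooth immersions which have the same induced metric (∂_iφ·∂_jφ = ∂_iφ̃·∂_jφ̃ on U) and the same second fundamental form (n·∂_i∂_jφ = ñ·∂_i∂_jφ̃ on U, where n, ñ are the respective unit normals). Then there exist Q ∈ SO(3) and b ∈ ℝ³ such that φ̃(p) = Q φ(p) + b for all p ∈ U; i.e., φ is unique up to rigid motion given its first and second fundamental forms. -/
noncomputable section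
open Matrix Real

/-- Points of the parameter domain `U ⊆ ℝ²`. -/
abbrev Pt : Type := Fin 2 → ℝ
/-- Vectors in `ℝ³`. -/
abbrev Vec3 : Type := Fin 3 → ℝ

/-- Partial derivative `∂ᵢ` of a scalar function on `ℝ²`. -/
def pd (i : Fin 2) (f : Pt → ℝ) : Pt → ℝ :=
  fun p => fderiv ℝ f p (Pi.single i 1)

/-- Partial derivative `∂ᵢ` of an `ℝ³`-valued function on `ℝ²`. -/
def pdV (i : Fin 2) (f : Pt → Vec3) : Pt → Vec3 :=
  fun p => fderiv ℝ f p (Pi.single i 1)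

/-- The induced metric (first fundamental form) `gᵢⱼ = ∂ᵢφ ⬝ ∂ⱼφ` of a map `φ : ℝ² → ℝ³`. -/
def indMetric (φ : Pt → Vec3) : Pt → Matrix (Fin 2) (Fin 2) ℝ :=
  fun p => Matrix.of fun i j => pdV i φ p ⬝ᵥ pdV j φ p

/-- The unit normal `n = (∂₁φ × ∂₂φ)/‖∂₁φ × ∂₂φ‖`. -/
def unitNormal (φ : Pt → Vec3) : Pt → Vec3 :=
  fun p => (Real.sqrt ((crossProduct (pdV 0 φ p) (pdV 1 φ p)) ⬝ᵥ
      (crossProduct (pdV 0 φ p) (pdV 1 φ p))))⁻¹ •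
    crossProduct (pdV 0 φ p) (pdV 1 φ p)

/-- The second fundamental form `hᵢⱼ = n ⬝ ∂ᵢ∂ⱼφ`. -/
def sff (φ : Pt → Vec3) : Pt → Matrix (Fin 2) (Fin 2) ℝ :=
  fun p => Matrix.of fun i j => unitNormal φ p ⬝ᵥ pdV i (pdV j φ) p

/-- Christoffel symbols `Γ^k_{ij}` of a metric `g`. -/
def christoffel (g : Pt → Matrix (Fin 2) (Fin 2) ℝ) (k i j : Fin 2) : Pt → ℝ :=
  fun p => (1/2) * ∑ l, (g p)⁻¹ k l *
    (pd i (fun q => g q j l) p + pd j (fun q => g q i l) p - pd l (fun q => g q i j) p)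

/-- Covariant derivative `∇ᵢ h_{jk}` of a symmetric 2-tensor `h` with respect to `g`. -/
def covD (g h : Pt → Matrix (Fin 2) (Fin 2) ℝ) (i j k : Fin 2) : Pt → ℝ :=
  fun p => pd i (fun q => h q j k) p
    - ∑ l, christoffel g l i j p * h p l k
    - ∑ l, christoffel g l i k p * h p j l

/-- Covariant Hessian `(∇²u)ᵢⱼ = ∂ᵢ∂ⱼu − Σₖ Γ^k_{ij} ∂ₖu`. -/
def hess (g : Pt → Matrix (Fin 2) (Fin 2) ℝ) (u : Pt → ℝ) (i j : Fin 2) : Pt → ℝ :=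
  fun p => pd i (pd j u) p - ∑ k, christoffel g k i j p * pd k u p

/-- The curvature component `R₁₂₁₂` of a metric `g` (indices `1,2` rendered as `0,1`). -/
def R1212 (g : Pt → Matrix (Fin 2) (Fin 2) ℝ) : Pt → ℝ :=
  fun p => ∑ m, g p 0 m *
    (pd 0 (christoffel g m 1 1) p - pd 1 (christoffel g m 1 0) p +
      ∑ l, (christoffel g m 0 l p * christoffel g l 1 1 p -
            christoffel g m 1 l p * christoffel g l 1 0 p))

/-- The Gauss curvature `K = R₁₂₁₂ / det g` of a metric `g`. -/
def gaussK (g : Pt → Matrix (Fin 2) (Fin 2) ℝ) : Pt → ℝ :=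
  fun p => R1212 g p / (g p).det

/-- The squared norm `|du|²_g = Σᵢⱼ g^{ij} ∂ᵢu ∂ⱼu`. -/
def gradSq (g : Pt → Matrix (Fin 2) (Fin 2) ℝ) (u : Pt → ℝ) : Pt → ℝ :=
  fun p => ∑ i, ∑ j, (g p)⁻¹ i j * pd i u p * pd j u p

/-- `g` is a smooth Riemannian metric on `U`: smooth entries, symmetric and
positive definite at each point of `U`. -/
def IsMetricOn (g : Pt → Matrix (Fin 2) (Fin 2) ℝ) (U : Set Pt) : Prop :=
  (∀ i j, ContDiffOn ℝ (⊤ : ℕ∞) (fun p => g p i j) U) ∧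
  (∀ p ∈ U, (g p).IsSymm ∧ (g p).PosDef)

/-- `φ` is a smooth immersion on `U`. -/
def IsImmersionOn (φ : Pt → Vec3) (U : Set Pt) : Prop :=
  ContDiffOn ℝ (⊤ : ℕ∞) φ U ∧
  ∀ p ∈ U, LinearIndependent ℝ ![pdV 0 φ p, pdV 1 φ p]

/-!
Let `F = (∂₀φ, ∂₁φ, n)` be the moving frame of an immersion, viewed as the matrix with these rows.
Its Gram matrix `F Fᵀ` is built from `g`, and the Gauss–Weingarten equations express
`∂ₖFₐ ⬝ F_b` through `g`, `∂g` and `h`. So for two immersions with the same `g` and `h`, the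
matrix `Q = F̃ᵀ (Fᵀ)⁻¹` carrying one frame to the other is orthogonal, has determinant `1` because
both frames are positively oriented, and satisfies `Q ∂ₖFₐ = ∂ₖF̃ₐ`. Differentiating
`Q Fₐ = F̃ₐ` then gives `(∂ₖQ) Fₐ = 0`, so `Q` is locally constant, hence constant on the connected
set `U`. Finally `∂ₖφ̃ = Q ∂ₖφ`, so `φ̃ - Qφ` is constant.
-/
open scoped ContDiff

section MatrixCalculus

variable {𝕜 E : Type*} [NontriviallyNormedField 𝕜] [NormedAddCommGroup E] [NormedSpace 𝕜 E]
  {n : Type*} [Fintype n] {x : E}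

theorem DifferentiableAt.dotProduct {f g : E → n → 𝕜} (hf : DifferentiableAt 𝕜 f x)
    (hg : DifferentiableAt 𝕜 g x) : DifferentiableAt 𝕜 (fun y => f y ⬝ᵥ g y) x := by
  have hfi : ∀ i, DifferentiableAt 𝕜 (fun y => f y i) x := differentiableAt_pi.1 hf
  have hgi : ∀ i, DifferentiableAt 𝕜 (fun y => g y i) x := differentiableAt_pi.1 hg
  show DifferentiableAt 𝕜 (fun y => ∑ i, f y i * g y i) x
  fun_prop

theorem fderiv_dotProduct_apply {f g : E → n → 𝕜} (hf : DifferentiableAt 𝕜 f x)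
    (hg : DifferentiableAt 𝕜 g x) (v : E) :
    fderiv 𝕜 (fun y => f y ⬝ᵥ g y) x v = fderiv 𝕜 f x v ⬝ᵥ g x + f x ⬝ᵥ fderiv 𝕜 g x v := by
  have hfi : ∀ i, DifferentiableAt 𝕜 (fun y => f y i) x := differentiableAt_pi.1 hf
  have hgi : ∀ i, DifferentiableAt 𝕜 (fun y => g y i) x := differentiableAt_pi.1 hg
  show fderiv 𝕜 (fun y => ∑ i, f y i * g y i) x v = _
  rw [fderiv_fun_sum (A := fun i y => f y i * g y i) fun i _ => (hfi i).mul (hgi i),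
    _root_.sum_apply, dotProduct, dotProduct, ← Finset.sum_add_distrib]
  refine Finset.sum_congr rfl fun i _ => ?_
  rw [fderiv_fun_mul (hfi i) (hgi i), fderiv_apply hf, fderiv_apply hg]
  simp only [_root_.add_apply, _root_.smul_apply,
    ContinuousLinearMap.comp_apply, ContinuousLinearMap.proj_apply, smul_eq_mul]
  ring

theorem DifferentiableAt.crossProduct {f g : E → Fin 3 → 𝕜} (hf : DifferentiableAt 𝕜 f x)
    (hg : DifferentiableAt 𝕜 g x) : DifferentiableAt 𝕜 (fun y => f y ⨯₃ g y) x := by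
  have hfi : ∀ i, DifferentiableAt 𝕜 (fun y => f y i) x := differentiableAt_pi.1 hf
  have hgi : ∀ i, DifferentiableAt 𝕜 (fun y => g y i) x := differentiableAt_pi.1 hg
  refine differentiableAt_pi.2 fun i => ?_
  simp only [cross_apply]
  fin_cases i <;>
    simp only [Fin.isValue, Fin.zero_eta, Fin.mk_one, Fin.reduceFinMk, cons_val_zero,
      cons_val_one, cons_val] <;>
    fun_prop

theorem DifferentiableAt.matrix_mul {A B : E → Matrix n n 𝕜}
    (hA : ∀ i j, DifferentiableAt 𝕜 (fun y => A y i j) x)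
    (hB : ∀ i j, DifferentiableAt 𝕜 (fun y => B y i j) x) (i j : n) :
    DifferentiableAt 𝕜 (fun y => (A y * B y) i j) x := by
  simp only [Matrix.mul_apply]
  exact DifferentiableAt.fun_sum fun k _ => (hA i k).mul (hB k j)

variable [DecidableEq n] {A : E → Matrix n n 𝕜}

theorem DifferentiableAt.matrix_det (hA : ∀ i j, DifferentiableAt 𝕜 (fun y => A y i j) x) :
    DifferentiableAt 𝕜 (fun y => (A y).det) x := by
  simp only [Matrix.det_apply']
  fun_prop

theorem DifferentiableAt.matrix_inv (hA : ∀ i j, DifferentiableAt 𝕜 (fun y => A y i j) x)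
    (hdet : (A x).det ≠ 0) (i j : n) : DifferentiableAt 𝕜 (fun y => (A y)⁻¹ i j) x := by
  have hadj : DifferentiableAt 𝕜 (fun y => (A y).adjugate i j) x := by
    simp only [Matrix.adjugate_apply]
    refine DifferentiableAt.matrix_det fun k l => ?_
    simp only [Matrix.updateRow_apply]
    split_ifs <;> fun_prop
  simp only [Matrix.inv_def, Ring.inverse_eq_inv', Matrix.smul_apply, smul_eq_mul]
  exact ((DifferentiableAt.matrix_det hA).inv hdet).mul hadj

end MatrixCalculus

theorem ContinuousLinearMap.ext_pi_single {ι F : Type*} [Fintype ι] [DecidableEq ι]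
    [NormedAddCommGroup F] [NormedSpace ℝ F] {L M : (ι → ℝ) →L[ℝ] F}
    (h : ∀ i, L (Pi.single i 1) = M (Pi.single i 1)) : L = M :=
  coe_injective <| (Pi.basisFun ℝ ι).ext fun i => by simpa using h i

theorem Matrix.mul_transpose_apply {α m n : Type*} [NonUnitalNonAssocSemiring α] [Fintype n]
    (A B : Matrix m n α) (i j : m) : (A * Bᵀ) i j = A i ⬝ᵥ B j :=
  rfl

section FrameChange

variable {R : Type*} [CommRing R] {n : Type*} [Fintype n] [DecidableEq n] {A B : Matrix n n R}

theorem Matrix.isUnit_det_of_mul_transpose_eq (hgram : A * Aᵀ = B * Bᵀ) (hA : IsUnit A.det) :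
    IsUnit B.det := by
  have h := congrArg Matrix.det hgram
  rw [Matrix.det_mul, Matrix.det_mul, Matrix.det_transpose, Matrix.det_transpose] at h
  exact isUnit_of_mul_isUnit_left (h ▸ hA.mul hA)

theorem Matrix.mulVec_eq_of_mul_transpose_eq (hgram : A * Aᵀ = B * Bᵀ) (hA : IsUnit A.det)
    {v w : n → R} (h : A *ᵥ v = B *ᵥ w) : (Bᵀ * Aᵀ⁻¹) *ᵥ v = w := by
  have hB := (Matrix.isUnit_iff_isUnit_det B).2 (Matrix.isUnit_det_of_mul_transpose_eq hgram hA)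
  refine Matrix.mulVec_injective_of_isUnit hB ?_
  rw [Matrix.mulVec_mulVec, ← Matrix.mul_assoc, ← hgram, Matrix.mul_assoc,
    Matrix.mul_nonsing_inv _ (by rwa [Matrix.det_transpose]), Matrix.mul_one, h]

theorem Matrix.transpose_mul_self_eq_one_of_mul_transpose_eq (hgram : A * Aᵀ = B * Bᵀ)
    (hA : IsUnit A.det) : (Bᵀ * Aᵀ⁻¹)ᵀ * (Bᵀ * Aᵀ⁻¹) = 1 := by
  have hAT : IsUnit Aᵀ.det := by rwa [Matrix.det_transpose]
  calc (Bᵀ * Aᵀ⁻¹)ᵀ * (Bᵀ * Aᵀ⁻¹) = A⁻¹ * (B * Bᵀ) * Aᵀ⁻¹ := by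
        rw [Matrix.transpose_mul, Matrix.transpose_nonsing_inv, Matrix.transpose_transpose,
          Matrix.transpose_transpose]
        noncomm_ring
    _ = 1 := by
        rw [← hgram, ← Matrix.mul_assoc, Matrix.nonsing_inv_mul _ hA, Matrix.one_mul,
          Matrix.mul_nonsing_inv _ hAT]

end FrameChange

theorem Matrix.det_eq_one_of_mul_transpose_eq {K : Type*} [Field K] [LinearOrder K]
    [IsStrictOrderedRing K] {n : Type*} [Fintype n] [DecidableEq n] {A B : Matrix n n K}
    (hgram : A * Aᵀ = B * Bᵀ) (hA : 0 < A.det) (hB : 0 < B.det) : (Bᵀ * Aᵀ⁻¹).det = 1 := by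
  have h := congrArg Matrix.det hgram
  rw [Matrix.det_mul, Matrix.det_mul, Matrix.det_transpose, Matrix.det_transpose] at h
  have hAB : B.det = A.det := by nlinarith
  rw [Matrix.det_mul, Matrix.det_nonsing_inv, Matrix.det_transpose, Matrix.det_transpose, hAB,
    Ring.inverse_eq_inv', mul_inv_cancel₀ hA.ne']

section PartialDerivatives

variable {p : Pt}

theorem pdV_apply {f : Pt → Vec3} (hf : DifferentiableAt ℝ f p) (k : Fin 2) (i : Fin 3) :
    pdV k f p i = pd k (fun q => f q i) p := by
  simp [pd, pdV, fderiv_apply hf]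

theorem pd_dotProduct {f g : Pt → Vec3} (hf : DifferentiableAt ℝ f p)
    (hg : DifferentiableAt ℝ g p) (k : Fin 2) :
    pd k (fun q => f q ⬝ᵥ g q) p = pdV k f p ⬝ᵥ g p + f p ⬝ᵥ pdV k g p :=
  fderiv_dotProduct_apply hf hg _

theorem pdV_mulVec {f : Pt → Vec3} (A : Matrix (Fin 3) (Fin 3) ℝ) (hf : DifferentiableAt ℝ f p)
    (k : Fin 2) : pdV k (fun q => A *ᵥ f q) p = A *ᵥ pdV k f p := by
  let L : Vec3 →L[ℝ] Vec3 := LinearMap.toContinuousLinearMap (Matrix.mulVecLin A)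
  have hL : HasFDerivAt (fun q => A *ᵥ f q) (L.comp (fderiv ℝ f p)) p :=
    L.hasFDerivAt.comp p hf.hasFDerivAt
  simp only [pdV, hL.fderiv]
  rfl

theorem pd_congr_of_eqOn {U : Set Pt} {f g : Pt → ℝ} (hU : IsOpen U) (h : Set.EqOn f g U)
    (hp : p ∈ U) (k : Fin 2) : pd k f p = pd k g p := by
  simp only [pd, (Filter.eventuallyEq_of_mem (hU.mem_nhds hp) h).fderiv_eq]

theorem pd_eq_zero_of_eqOn_const {U : Set Pt} {f : Pt → ℝ} {c : ℝ} (hU : IsOpen U)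
    (h : Set.EqOn f (fun _ => c) U) (hp : p ∈ U) (k : Fin 2) : pd k f p = 0 := by
  rw [pd_congr_of_eqOn hU h hp]
  simp [pd]

theorem ContDiffAt.pdV {f : Pt → Vec3} (hf : ContDiffAt ℝ ∞ f p) (i : Fin 2) :
    ContDiffAt ℝ ∞ (pdV i f) p :=
  (hf.fderiv_right le_rfl).clm_apply contDiffAt_const

theorem pdV_comm {f : Pt → Vec3} (hf : ContDiffAt ℝ ∞ f p) (i j : Fin 2) :
    pdV i (pdV j f) p = pdV j (pdV i f) p := by
  have hsymm := hf.isSymmSndFDerivAt <| by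
    rw [minSmoothness_of_isRCLikeNormedField]
    exact WithTop.coe_le_coe.2 le_top
  have hd : DifferentiableAt ℝ (fderiv ℝ f) p :=
    (hf.fderiv_right (m := ∞) (by norm_cast)).differentiableAt (by norm_cast)
  have hsnd : ∀ a b : Fin 2,
      pdV a (pdV b f) p = fderiv ℝ (fderiv ℝ f) p (Pi.single a 1) (Pi.single b 1) := by
    intro a b
    change fderiv ℝ (fun q => fderiv ℝ f q (Pi.single b 1)) p (Pi.single a 1) = _
    simp [fderiv_clm_apply hd (differentiableAt_const _)]
  rw [hsnd, hsnd, hsymm]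

end PartialDerivatives

section Frame

variable {φ : Pt → Vec3} {p : Pt}

def frame (φ : Pt → Vec3) (p : Pt) : Matrix (Fin 3) (Fin 3) ℝ :=
  ![pdV 0 φ p, pdV 1 φ p, unitNormal φ p]

theorem unitNormal_dotProduct_pdV (φ : Pt → Vec3) (p : Pt) (i : Fin 2) :
    unitNormal φ p ⬝ᵥ pdV i φ p = 0 := by
  rw [unitNormal, smul_dotProduct, dotProduct_comm _ (pdV i φ p)]
  fin_cases i <;> simp [dot_self_cross, dot_cross_self]

theorem dotProduct_crossProduct_self_pos (hind : LinearIndependent ℝ ![pdV 0 φ p, pdV 1 φ p]) :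
    0 < pdV 0 φ p ⨯₃ pdV 1 φ p ⬝ᵥ pdV 0 φ p ⨯₃ pdV 1 φ p := by
  simpa using Matrix.dotProduct_self_star_pos_iff.2
    (crossProduct_ne_zero_iff_linearIndependent.2 hind)

theorem unitNormal_dotProduct_self (hind : LinearIndependent ℝ ![pdV 0 φ p, pdV 1 φ p]) :
    unitNormal φ p ⬝ᵥ unitNormal φ p = 1 := by
  have hpos := dotProduct_crossProduct_self_pos hind
  rw [unitNormal, smul_dotProduct, dotProduct_smul, smul_eq_mul, smul_eq_mul]
  field_simp
  rw [Real.sq_sqrt hpos.le]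

theorem det_frame_pos (hind : LinearIndependent ℝ ![pdV 0 φ p, pdV 1 φ p]) :
    0 < (frame φ p).det := by
  have hpos := dotProduct_crossProduct_self_pos hind
  have hdet : (frame φ p).det = unitNormal φ p ⬝ᵥ pdV 0 φ p ⨯₃ pdV 1 φ p := by
    rw [frame, ← triple_product_eq_det, triple_product_permutation, triple_product_permutation]
  rw [hdet, unitNormal, smul_dotProduct, smul_eq_mul]
  exact mul_pos (inv_pos.2 (Real.sqrt_pos.2 hpos)) hpos

theorem differentiableAt_unitNormal (hφ : ContDiffAt ℝ ∞ φ p)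
    (hind : LinearIndependent ℝ ![pdV 0 φ p, pdV 1 φ p]) :
    DifferentiableAt ℝ (unitNormal φ) p := by
  have hpos := dotProduct_crossProduct_self_pos hind
  have hd : ∀ i, DifferentiableAt ℝ (pdV i φ) p := fun i =>
    (hφ.pdV i).differentiableAt (by simp)
  have hc : DifferentiableAt ℝ (fun q => pdV 0 φ q ⨯₃ pdV 1 φ q) p := (hd 0).crossProduct (hd 1)
  exact (((hc.dotProduct hc).sqrt hpos.ne').inv (Real.sqrt_pos.2 hpos).ne').smul hc

theorem differentiableAt_frame (hφ : ContDiffAt ℝ ∞ φ p)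
    (hind : LinearIndependent ℝ ![pdV 0 φ p, pdV 1 φ p]) (a : Fin 3) :
    DifferentiableAt ℝ (fun q => frame φ q a) p := by
  fin_cases a
  · exact (hφ.pdV 0).differentiableAt (by simp)
  · exact (hφ.pdV 1).differentiableAt (by simp)
  · exact differentiableAt_unitNormal hφ hind

theorem frame_mul_transpose (hind : LinearIndependent ℝ ![pdV 0 φ p, pdV 1 φ p]) :
    frame φ p * (frame φ p)ᵀ =
      !![indMetric φ p 0 0, indMetric φ p 0 1, 0;
        indMetric φ p 1 0, indMetric φ p 1 1, 0;
        0, 0, 1] := by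
  ext a b
  rw [Matrix.mul_transpose_apply]
  fin_cases a <;> fin_cases b <;>
    simp [frame, indMetric, unitNormal_dotProduct_pdV,
      unitNormal_dotProduct_self hind, dotProduct_comm _ (unitNormal φ p)]

end Frame

def christoffelFirst (g : Pt → Matrix (Fin 2) (Fin 2) ℝ) (k i j : Fin 2) (p : Pt) : ℝ :=
  (pd k (fun q => g q i j) p + pd i (fun q => g q k j) p - pd j (fun q => g q k i) p) / 2

/-- Entry `(a, b)` is `∂ₖFₐ ⬝ F_b` for the frame `F` of an immersion with metric `g` and second
fundamental form `h`. -/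
def gaussWeingarten (g h : Pt → Matrix (Fin 2) (Fin 2) ℝ) (k : Fin 2) (p : Pt) :
    Matrix (Fin 3) (Fin 3) ℝ :=
  !![christoffelFirst g k 0 0 p, christoffelFirst g k 0 1 p, h p k 0;
    christoffelFirst g k 1 0 p, christoffelFirst g k 1 1 p, h p k 1;
    -h p k 0, -h p k 1, 0]

theorem gaussWeingarten_congr {U : Set Pt} (hU : IsOpen U)
    {g g' h h' : Pt → Matrix (Fin 2) (Fin 2) ℝ} (hg : Set.EqOn g g' U) (hh : Set.EqOn h h' U)
    {p : Pt} (hp : p ∈ U) (k : Fin 2) :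
    gaussWeingarten g h k p = gaussWeingarten g' h' k p := by
  have hpd : ∀ l i j, pd l (fun q => g q i j) p = pd l (fun q => g' q i j) p := fun l i j =>
    pd_congr_of_eqOn hU (fun q hq => by rw [hg hq]) hp l
  simp only [gaussWeingarten, christoffelFirst, hpd, hh hp]

section GaussWeingarten

variable {φ : Pt → Vec3} {p : Pt}

theorem pdV_pdV_dotProduct_pdV (hφ : ContDiffAt ℝ ∞ φ p) (k i j : Fin 2) :
    pdV k (pdV i φ) p ⬝ᵥ pdV j φ p = christoffelFirst (indMetric φ) k i j p := by
  have hd : ∀ i, DifferentiableAt ℝ (pdV i φ) p := fun i =>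
    (hφ.pdV i).differentiableAt (by simp)
  have hpdg : ∀ a b c, pd a (fun q => indMetric φ q b c) p
      = pdV a (pdV b φ) p ⬝ᵥ pdV c φ p + pdV a (pdV c φ) p ⬝ᵥ pdV b φ p := fun a b c => by
    rw [show (fun q => indMetric φ q b c) = fun q => pdV b φ q ⬝ᵥ pdV c φ q from rfl,
      pd_dotProduct (hd b) (hd c), dotProduct_comm (pdV b φ p)]
  rw [christoffelFirst, hpdg, hpdg, hpdg, pdV_comm hφ i k, pdV_comm hφ j k, pdV_comm hφ j i]
  ring

theorem pdV_unitNormal_dotProduct_pdV (hφ : ContDiffAt ℝ ∞ φ p)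
    (hind : LinearIndependent ℝ ![pdV 0 φ p, pdV 1 φ p]) (k j : Fin 2) :
    pdV k (unitNormal φ) p ⬝ᵥ pdV j φ p = -sff φ p k j := by
  have h0 : pd k (fun q => unitNormal φ q ⬝ᵥ pdV j φ q) p = 0 := by
    simp [unitNormal_dotProduct_pdV, pd]
  rw [pd_dotProduct (differentiableAt_unitNormal hφ hind)
    ((hφ.pdV j).differentiableAt (by simp))] at h0
  rw [sff, Matrix.of_apply]
  linarith

theorem pdV_unitNormal_dotProduct_self {U : Set Pt} (hU : IsOpen U) (hφ : IsImmersionOn φ U)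
    (hp : p ∈ U) (k : Fin 2) : pdV k (unitNormal φ) p ⬝ᵥ unitNormal φ p = 0 := by
  have hn := differentiableAt_unitNormal (hφ.1.contDiffAt (hU.mem_nhds hp)) (hφ.2 p hp)
  have h0 : pd k (fun q => unitNormal φ q ⬝ᵥ unitNormal φ q) p = 0 :=
    pd_eq_zero_of_eqOn_const hU (fun q hq => unitNormal_dotProduct_self (hφ.2 q hq)) hp k
  rw [pd_dotProduct hn hn, dotProduct_comm (unitNormal φ p)] at h0
  linarith

theorem frame_mulVec_pdV_frame {U : Set Pt} (hU : IsOpen U) (hφ : IsImmersionOn φ U)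
    (hp : p ∈ U) (k : Fin 2) (a : Fin 3) :
    frame φ p *ᵥ pdV k (fun q => frame φ q a) p = gaussWeingarten (indMetric φ) (sff φ) k p a := by
  have hφp : ContDiffAt ℝ ∞ φ p := hφ.1.contDiffAt (hU.mem_nhds hp)
  ext b
  rw [Matrix.mulVec, dotProduct_comm]
  fin_cases a <;> fin_cases b <;>
    simp [frame, gaussWeingarten, pdV_pdV_dotProduct_pdV hφp,
      pdV_unitNormal_dotProduct_pdV hφp (hφ.2 p hp), pdV_unitNormal_dotProduct_self hU hφ hp, sff,
      dotProduct_comm _ (unitNormal φ p)]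

end GaussWeingarten

def frameRotation (φ φt : Pt → Vec3) (p : Pt) : Matrix (Fin 3) (Fin 3) ℝ :=
  (frame φt p)ᵀ * ((frame φ p)ᵀ)⁻¹

section FrameRotation

variable {φ φt : Pt → Vec3} {p : Pt}

section Pointwise

variable (hind : LinearIndependent ℝ ![pdV 0 φ p, pdV 1 φ p])
  (hindt : LinearIndependent ℝ ![pdV 0 φt p, pdV 1 φt p])
  (hmet : indMetric φ p = indMetric φt p)
include hind hindt hmet

theorem frame_mul_transpose_eq : frame φ p * (frame φ p)ᵀ = frame φt p * (frame φt p)ᵀ := by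
  rw [frame_mul_transpose hind, frame_mul_transpose hindt, hmet]

theorem frameRotation_transpose_mul_self : (frameRotation φ φt p)ᵀ * frameRotation φ φt p = 1 :=
  Matrix.transpose_mul_self_eq_one_of_mul_transpose_eq (frame_mul_transpose_eq hind hindt hmet)
    (det_frame_pos hind).ne'.isUnit

theorem det_frameRotation : (frameRotation φ φt p).det = 1 :=
  Matrix.det_eq_one_of_mul_transpose_eq (frame_mul_transpose_eq hind hindt hmet)
    (det_frame_pos hind) (det_frame_pos hindt)

theorem frameRotation_mulVec_of_frame_mulVec_eq {v w : Vec3}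
    (h : frame φ p *ᵥ v = frame φt p *ᵥ w) : frameRotation φ φt p *ᵥ v = w :=
  Matrix.mulVec_eq_of_mul_transpose_eq (frame_mul_transpose_eq hind hindt hmet)
    (det_frame_pos hind).ne'.isUnit h

theorem frameRotation_mulVec_frame (a : Fin 3) :
    frameRotation φ φt p *ᵥ frame φ p a = frame φt p a := by
  refine frameRotation_mulVec_of_frame_mulVec_eq hind hindt hmet (funext fun b => ?_)
  have h := congrFun (congrFun (frame_mul_transpose_eq hind hindt hmet) b) a
  rwa [Matrix.mul_transpose_apply, Matrix.mul_transpose_apply] at h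

theorem frameRotation_mulVec_pdV (k : Fin 2) :
    frameRotation φ φt p *ᵥ pdV k φ p = pdV k φt p := by
  fin_cases k
  · exact frameRotation_mulVec_frame hind hindt hmet 0
  · exact frameRotation_mulVec_frame hind hindt hmet 1

end Pointwise

theorem differentiableAt_frameRotation_row (hφ : ContDiffAt ℝ ∞ φ p)
    (hind : LinearIndependent ℝ ![pdV 0 φ p, pdV 1 φ p]) (hφt : ContDiffAt ℝ ∞ φt p)
    (hindt : LinearIndependent ℝ ![pdV 0 φt p, pdV 1 φt p]) (i : Fin 3) :
    DifferentiableAt ℝ (fun q => frameRotation φ φt q i) p := by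
  have hF : ∀ a b, DifferentiableAt ℝ (fun q => (frame φ q)ᵀ a b) p := fun a b =>
    differentiableAt_pi.1 (differentiableAt_frame hφ hind b) a
  have hFt : ∀ a b, DifferentiableAt ℝ (fun q => (frame φt q)ᵀ a b) p := fun a b =>
    differentiableAt_pi.1 (differentiableAt_frame hφt hindt b) a
  have hdet : ((frame φ p)ᵀ).det ≠ 0 := by
    rw [Matrix.det_transpose]
    exact (det_frame_pos hind).ne'
  exact differentiableAt_pi.2
    (DifferentiableAt.matrix_mul hFt (DifferentiableAt.matrix_inv hF hdet) i)

variable {U : Set Pt} (hU : IsOpen U) (hφ : IsImmersionOn φ U) (hφt : IsImmersionOn φt U)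
  (hmet : Set.EqOn (indMetric φ) (indMetric φt) U) (hsff : Set.EqOn (sff φ) (sff φt) U)
include hU hφ hφt hmet hsff

theorem frameRotation_mulVec_pdV_frame (hp : p ∈ U) (k : Fin 2) (a : Fin 3) :
    frameRotation φ φt p *ᵥ pdV k (fun q => frame φ q a) p = pdV k (fun q => frame φt q a) p := by
  refine frameRotation_mulVec_of_frame_mulVec_eq (hφ.2 p hp) (hφt.2 p hp) (hmet hp) ?_
  rw [frame_mulVec_pdV_frame hU hφ hp, frame_mulVec_pdV_frame hU hφt hp,
    gaussWeingarten_congr hU hmet hsff hp]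

theorem pdV_frameRotation_row_eq_zero (hp : p ∈ U) (k : Fin 2) (i : Fin 3) :
    pdV k (fun q => frameRotation φ φt q i) p = 0 := by
  have hφp := hφ.1.contDiffAt (hU.mem_nhds hp)
  have hφtp := hφt.1.contDiffAt (hU.mem_nhds hp)
  have hrow : ∀ a, pdV k (fun q => frameRotation φ φt q i) p ⬝ᵥ frame φ p a = 0 := by
    intro a
    have h : pd k (fun q => frameRotation φ φt q i ⬝ᵥ frame φ q a) p
        = pd k (fun q => frame φt q a i) p := pd_congr_of_eqOn hU (fun q hq => congrFun
      (frameRotation_mulVec_frame (hφ.2 q hq) (hφt.2 q hq) (hmet hq) a) i) hp k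
    rw [pd_dotProduct (differentiableAt_frameRotation_row hφp (hφ.2 p hp) hφtp (hφt.2 p hp) i)
      (differentiableAt_frame hφp (hφ.2 p hp) a),
      ← pdV_apply (differentiableAt_frame hφtp (hφt.2 p hp) a),
      ← frameRotation_mulVec_pdV_frame hU hφ hφt hmet hsff hp] at h
    change _ + frameRotation φ φt p i ⬝ᵥ _ = frameRotation φ φt p i ⬝ᵥ _ at h
    linarith
  exact Matrix.eq_zero_of_mulVec_eq_zero (det_frame_pos (hφ.2 p hp)).ne'
    (funext fun a => by rw [Matrix.mulVec, dotProduct_comm]; exact hrow a)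

theorem frameRotation_eq_of_isPreconnected (hUc : IsPreconnected U) {p₀ : Pt} (hp₀ : p₀ ∈ U)
    (hp : p ∈ U) : frameRotation φ φt p = frameRotation φ φt p₀ := by
  ext i j
  refine congrFun (hU.is_const_of_fderiv_eq_zero (𝕜 := ℝ) hUc
    (f := fun q => frameRotation φ φt q i) (fun q hq => ?_) (fun q hq => ?_) hp hp₀) j
  · have hq' := hU.mem_nhds hq
    exact (differentiableAt_frameRotation_row (hφ.1.contDiffAt hq') (hφ.2 q hq)
      (hφt.1.contDiffAt hq') (hφt.2 q hq) i).differentiableWithinAt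
  · exact ContinuousLinearMap.ext_pi_single fun k => by
      simpa [pdV] using pdV_frameRotation_row_eq_zero hU hφ hφt hmet hsff hq k i

end FrameRotation

/-- **Bonnet's theorem (rigidity).** Two smooth immersions of a connected open set
`U ⊆ ℝ²` into `ℝ³` with the same first and second fundamental forms differ by a rigid
motion: a rotation `Q ∈ SO(3)` followed by a translation `b`. -/
theorem bonnet_rigidity
    (U : Set Pt) (hU : IsOpen U) (hUconn : IsConnected U)
    (φ φt : Pt → Vec3)
    (hφ : IsImmersionOn φ U) (hφt : IsImmersionOn φt U)
    (hmet : ∀ p ∈ U, indMetric φ p = indMetric φt p)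
    (hsff : ∀ p ∈ U, sff φ p = sff φt p) :
    ∃ (Q : Matrix (Fin 3) (Fin 3) ℝ) (b : Vec3),
      Qᵀ * Q = 1 ∧ Q.det = 1 ∧
      ∀ p ∈ U, φt p = Q.mulVec (φ p) + b := by
  obtain ⟨p₀, hp₀⟩ := hUconn.nonempty
  set Q := frameRotation φ φt p₀
  have hQ : ∀ p ∈ U, frameRotation φ φt p = Q := fun p hp =>
    frameRotation_eq_of_isPreconnected hU hφ hφt hmet hsff hUconn.isPreconnected hp₀ hp
  have hdiff : DifferentiableOn ℝ φ U := hφ.1.differentiableOn (by simp)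
  have hderiv : Set.EqOn (fderiv ℝ φt) (fderiv ℝ fun p => Q *ᵥ φ p) U := fun p hp =>
    ContinuousLinearMap.ext_pi_single fun k => by
      change pdV k φt p = pdV k (fun p => Q *ᵥ φ p) p
      rw [pdV_mulVec _ (hdiff.differentiableAt (hU.mem_nhds hp)), ← hQ p hp,
        frameRotation_mulVec_pdV (hφ.2 p hp) (hφt.2 p hp) (hmet p hp)]
  obtain ⟨b, hb⟩ := hU.exists_eq_add_of_fderiv_eq hUconn.isPreconnected
    (hφt.1.differentiableOn (by simp))
    ((LinearMap.toContinuousLinearMap (Matrix.mulVecLin Q)).differentiable.comp_differentiableOn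
      hdiff) hderiv
  exact ⟨Q, b, frameRotation_transpose_mul_self (hφ.2 p₀ hp₀) (hφt.2 p₀ hp₀) (hmet p₀ hp₀),
    det_frameRotation (hφ.2 p₀ hp₀) (hφt.2 p₀ hp₀) (hmet p₀ hp₀), fun p hp => hb hp⟩
end
end

section
/- On U = {(x,y) ∈ ℝ² : x > 0}, the metric g₁ given by the matrix G₁(x,y) = diag(cosh⁴x, sinh²x) (i.e., g₁ = (cosh⁴x)dx² + (sinh²x)dy²) has Gauss curvature K = 1/cosh⁴x > 0, and the function k := √K = 1/cosh²x satisfies the tensor equation (∇²k)_{ij} = (5/(2k)) ∂_i k ∂_j k − 2k³ (g₁)_{ij} on U. -/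
noncomputable section
open Matrix Real

/-- The model metric `g₁ = cosh⁴x dx² + sinh²x dy²` on the half-plane `x > 0`. -/
def modelG : Pt → Matrix (Fin 2) (Fin 2) ℝ :=
  fun q => !![Real.cosh (q 0) ^ 4, 0; 0, Real.sinh (q 0) ^ 2]

/-- The candidate square root of the (absolute) Gauss curvature. -/
def modelk : Pt → ℝ :=
  fun q => 1 / Real.cosh (q 0) ^ 2

/-!
Both `g₁` and `k` depend on `x` alone. For a metric `E(x) dx² + G(x) dy²` the only nonzero
Christoffel symbols are `Γ⁰₀₀ = E'/2E`, `Γ⁰₁₁ = -G'/2E` and `Γ¹₀₁ = Γ¹₁₀ = G'/2G`, whence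
`R₁₂₁₂ = -G''/2 + E'G'/4E + G'²/4G`, and the Hessian of a function `u(x)` is
`diag(u'' - E'u'/2E, G'u'/2E)`. For `E = cosh⁴`, `G = sinh²` this gives `R₁₂₁₂ = sinh²`, so
`K = 1/cosh⁴`, and the tensor equation reduces to two polynomial identities in `sinh x`, `cosh x`.
-/

open Filter Topology

lemma pd_zero_comp_apply_zero {h : ℝ → ℝ} {a : ℝ} {p : Pt} (hd : HasDerivAt h a (p 0)) :
    pd 0 (fun q => h (q 0)) p = a := by
  have hf : HasFDerivAt (fun q : Pt => h (q 0)) (a • (ContinuousLinearMap.proj 0 : Pt →L[ℝ] ℝ)) p :=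
    hd.comp_hasFDerivAt p
      (ContinuousLinearMap.proj (R := ℝ) (φ := fun _ : Fin 2 => ℝ) 0).hasFDerivAt
  simp [pd, hf.fderiv]

lemma pd_one_comp_apply_zero (h : ℝ → ℝ) (p : Pt) : pd 1 (fun q => h (q 0)) p = 0 := by
  by_cases hd : DifferentiableAt ℝ (fun q : Pt => h (q 0)) p
  · have hline : (fun t : ℝ => h ((p + t • Pi.single 1 1 : Pt) 0)) = fun _ => h (p 0) := by
      funext t
      simp
    rw [pd, ← hd.lineDeriv_eq_fderiv, lineDeriv, hline, deriv_const]
  · rw [pd, fderiv_zero_of_not_differentiableAt hd, _root_.zero_apply]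

lemma pd_const (i : Fin 2) (c : ℝ) (p : Pt) : pd i (fun _ => c) p = 0 := by
  simp [pd]

lemma pd_congr {f f' : Pt → ℝ} {p : Pt} (h : f =ᶠ[𝓝 p] f') (i : Fin 2) :
    pd i f p = pd i f' p := by
  rw [pd, pd, h.fderiv_eq]

def diagMetric (E G : ℝ → ℝ) : Pt → Matrix (Fin 2) (Fin 2) ℝ :=
  fun q => !![E (q 0), 0; 0, G (q 0)]

def diagChristoffel (E G E' G' : ℝ → ℝ) (x : ℝ) : Fin 2 → Fin 2 → Fin 2 → ℝ :=
  ![![![E' x / (2 * E x), 0], ![0, -G' x / (2 * E x)]],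
    ![![0, G' x / (2 * G x)], ![G' x / (2 * G x), 0]]]

section DiagMetric

variable {E G E' G' : ℝ → ℝ} {p : Pt}

lemma diagMetric_inv (hE : E (p 0) ≠ 0) (hG : G (p 0) ≠ 0) :
    (diagMetric E G p)⁻¹ = !![(E (p 0))⁻¹, 0; 0, (G (p 0))⁻¹] := by
  apply Matrix.inv_eq_right_inv
  simp [diagMetric, hE, hG, Matrix.one_fin_two]

lemma christoffel_diagMetric (hE : HasDerivAt E (E' (p 0)) (p 0))
    (hG : HasDerivAt G (G' (p 0)) (p 0)) (hE0 : E (p 0) ≠ 0) (hG0 : G (p 0) ≠ 0)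
    (k i j : Fin 2) :
    christoffel (diagMetric E G) k i j p = diagChristoffel E G E' G' (p 0) k i j := by
  have h00 : pd 0 (fun q => diagMetric E G q 0 0) p = E' (p 0) :=
    pd_zero_comp_apply_zero (h := E) hE
  have h11 : pd 0 (fun q => diagMetric E G q 1 1) p = G' (p 0) :=
    pd_zero_comp_apply_zero (h := G) hG
  have h00' : pd 1 (fun q => diagMetric E G q 0 0) p = 0 := pd_one_comp_apply_zero E p
  have h11' : pd 1 (fun q => diagMetric E G q 1 1) p = 0 := pd_one_comp_apply_zero G p
  have h01 (l : Fin 2) : pd l (fun q => diagMetric E G q 0 1) p = 0 := pd_const l 0 p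
  have h10 (l : Fin 2) : pd l (fun q => diagMetric E G q 1 0) p = 0 := pd_const l 0 p
  fin_cases k <;> fin_cases i <;> fin_cases j <;>
    simp only [christoffel, diagChristoffel, Fin.sum_univ_two, diagMetric_inv hE0 hG0,
      h00, h11, h00', h11', h01, h10, Fin.zero_eta, Fin.mk_one, Fin.isValue,
      Matrix.of_apply, Matrix.cons_val', Matrix.cons_val_zero, Matrix.cons_val_one,
      Matrix.empty_val', Matrix.cons_val_fin_one] <;>
    field_simp <;> ring

lemma christoffel_diagMetric_eventuallyEq
    (hEG : ∀ᶠ x in 𝓝 (p 0), HasDerivAt E (E' x) x ∧ HasDerivAt G (G' x) x ∧ E x ≠ 0 ∧ G x ≠ 0)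
    (k i j : Fin 2) :
    christoffel (diagMetric E G) k i j =ᶠ[𝓝 p] fun q => diagChristoffel E G E' G' (q 0) k i j := by
  filter_upwards [((continuous_apply 0).tendsto p).eventually hEG] with q ⟨hE, hG, hE0, hG0⟩
  exact christoffel_diagMetric hE hG hE0 hG0 k i j

lemma R1212_diagMetric {G'' : ℝ}
    (hEG : ∀ᶠ x in 𝓝 (p 0), HasDerivAt E (E' x) x ∧ HasDerivAt G (G' x) x ∧ E x ≠ 0 ∧ G x ≠ 0)
    (hG' : HasDerivAt G' G'' (p 0)) :
    R1212 (diagMetric E G) p = -G'' / 2 + E' (p 0) * G' (p 0) / (4 * E (p 0))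
      + G' (p 0) ^ 2 / (4 * G (p 0)) := by
  obtain ⟨hE, hG, hE0, hG0⟩ := hEG.self_of_nhds
  have hΓ011 : pd 0 (christoffel (diagMetric E G) 0 1 1) p
      = -(G'' * E (p 0) - G' (p 0) * E' (p 0)) / (2 * E (p 0) ^ 2) := by
    rw [pd_congr (christoffel_diagMetric_eventuallyEq hEG 0 1 1)]
    refine pd_zero_comp_apply_zero (h := fun x => -G' x / (2 * E x)) ?_
    refine (hG'.fun_neg.fun_div (hE.const_mul 2) (mul_ne_zero two_ne_zero hE0)).congr_deriv ?_
    field_simp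
    ring
  have hΓ010 : pd 1 (christoffel (diagMetric E G) 0 1 0) p = 0 := by
    rw [pd_congr (christoffel_diagMetric_eventuallyEq hEG 0 1 0)]
    exact pd_one_comp_apply_zero (fun x => diagChristoffel E G E' G' x 0 1 0) p
  simp only [R1212, Fin.sum_univ_two, christoffel_diagMetric hE hG hE0 hG0, hΓ011, hΓ010,
    diagMetric, diagChristoffel, Fin.isValue, Matrix.of_apply, Matrix.cons_val',
    Matrix.cons_val_zero, Matrix.cons_val_one, Matrix.empty_val', Matrix.cons_val_fin_one]
  field_simp
  ring

lemma gaussK_diagMetric {G'' : ℝ}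
    (hEG : ∀ᶠ x in 𝓝 (p 0), HasDerivAt E (E' x) x ∧ HasDerivAt G (G' x) x ∧ E x ≠ 0 ∧ G x ≠ 0)
    (hG' : HasDerivAt G' G'' (p 0)) :
    gaussK (diagMetric E G) p = (-G'' / 2 + E' (p 0) * G' (p 0) / (4 * E (p 0))
      + G' (p 0) ^ 2 / (4 * G (p 0))) / (E (p 0) * G (p 0)) := by
  rw [gaussK, R1212_diagMetric hEG hG', diagMetric, Matrix.det_fin_two_of, mul_zero, sub_zero]

lemma hess_diagMetric {u u' : ℝ → ℝ} {u'' : ℝ} (hE : HasDerivAt E (E' (p 0)) (p 0))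
    (hG : HasDerivAt G (G' (p 0)) (p 0)) (hE0 : E (p 0) ≠ 0) (hG0 : G (p 0) ≠ 0)
    (hu : ∀ᶠ x in 𝓝 (p 0), HasDerivAt u (u' x) x) (hu' : HasDerivAt u' u'' (p 0))
    (i j : Fin 2) :
    hess (diagMetric E G) (fun q => u (q 0)) i j p =
      ![![u'' - E' (p 0) / (2 * E (p 0)) * u' (p 0), 0],
        ![0, G' (p 0) / (2 * E (p 0)) * u' (p 0)]] i j := by
  have hpd0 : pd 0 (fun q => u (q 0)) =ᶠ[𝓝 p] fun q => u' (q 0) := by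
    filter_upwards [((continuous_apply 0).tendsto p).eventually hu] with q hq
    exact pd_zero_comp_apply_zero hq
  have h00 : pd 0 (pd 0 fun q => u (q 0)) p = u'' := by
    rw [pd_congr hpd0]
    exact pd_zero_comp_apply_zero hu'
  have h10 : pd 1 (pd 0 fun q => u (q 0)) p = 0 := by
    rw [pd_congr hpd0]
    exact pd_one_comp_apply_zero u' p
  have h1 (l : Fin 2) : pd l (pd 1 fun q => u (q 0)) p = 0 := by
    rw [funext (pd_one_comp_apply_zero u)]
    exact pd_const l 0 p
  fin_cases i <;> fin_cases j <;>
    simp only [hess, Fin.sum_univ_two, christoffel_diagMetric hE hG hE0 hG0, diagChristoffel,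
      h00, h10, h1, hpd0.self_of_nhds, pd_one_comp_apply_zero, Fin.zero_eta, Fin.mk_one,
      Fin.isValue, Matrix.cons_val', Matrix.cons_val_zero, Matrix.cons_val_one,
      Matrix.empty_val', Matrix.cons_val_fin_one] <;>
    ring

end DiagMetric

lemma modelG_eq_diagMetric :
    modelG = diagMetric (fun x => cosh x ^ 4) (fun x => sinh x ^ 2) := rfl

lemma hasDerivAt_cosh_pow_four (x : ℝ) :
    HasDerivAt (fun x => cosh x ^ 4) (4 * cosh x ^ 3 * sinh x) x := by
  refine ((hasDerivAt_cosh x).fun_pow 4).congr_deriv ?_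
  ring

lemma hasDerivAt_sinh_sq (x : ℝ) :
    HasDerivAt (fun x => sinh x ^ 2) (2 * sinh x * cosh x) x := by
  refine ((hasDerivAt_sinh x).fun_pow 2).congr_deriv ?_
  ring

lemma hasDerivAt_two_mul_sinh_mul_cosh (x : ℝ) :
    HasDerivAt (fun x => 2 * sinh x * cosh x) (2 * (cosh x ^ 2 + sinh x ^ 2)) x := by
  refine (((hasDerivAt_sinh x).const_mul 2).mul (hasDerivAt_cosh x)).congr_deriv ?_
  ring

lemma hasDerivAt_one_div_cosh_sq (x : ℝ) :
    HasDerivAt (fun x => 1 / cosh x ^ 2) (-2 * sinh x / cosh x ^ 3) x := by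
  have hc : cosh x ≠ 0 := (cosh_pos x).ne'
  refine ((hasDerivAt_const x 1).fun_div ((hasDerivAt_cosh x).fun_pow 2)
    (by positivity)).congr_deriv ?_
  field_simp
  ring

lemma hasDerivAt_neg_two_mul_sinh_div_cosh_pow_three (x : ℝ) :
    HasDerivAt (fun x => -2 * sinh x / cosh x ^ 3)
      ((6 * sinh x ^ 2 - 2 * cosh x ^ 2) / cosh x ^ 4) x := by
  have hc : cosh x ≠ 0 := (cosh_pos x).ne'
  refine (((hasDerivAt_sinh x).const_mul (-2)).fun_div ((hasDerivAt_cosh x).fun_pow 3)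
    (by positivity)).congr_deriv ?_
  field_simp
  ring

lemma gaussK_modelG {p : Pt} (hp : p 0 ≠ 0) : gaussK modelG p = 1 / cosh (p 0) ^ 4 := by
  have hEG : ∀ᶠ x in 𝓝 (p 0), HasDerivAt (fun x => cosh x ^ 4) (4 * cosh x ^ 3 * sinh x) x ∧
      HasDerivAt (fun x => sinh x ^ 2) (2 * sinh x * cosh x) x ∧ cosh x ^ 4 ≠ 0 ∧
      sinh x ^ 2 ≠ 0 := by
    filter_upwards [eventually_ne_nhds hp] with x hx
    exact ⟨hasDerivAt_cosh_pow_four x, hasDerivAt_sinh_sq x, by positivity, by simpa using hx⟩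
  rw [modelG_eq_diagMetric, gaussK_diagMetric hEG (hasDerivAt_two_mul_sinh_mul_cosh (p 0))]
  have hs : sinh (p 0) ≠ 0 := by simpa using hp
  have hc : cosh (p 0) ≠ 0 := (cosh_pos _).ne'
  field_simp
  ring

lemma hess_modelG_modelk {p : Pt} (hp : p 0 ≠ 0) (i j : Fin 2) :
    hess modelG modelk i j p =
      5 / (2 * modelk p) * pd i modelk p * pd j modelk p - 2 * modelk p ^ 3 * modelG p i j := by
  have hk0 : pd 0 modelk p = -2 * sinh (p 0) / cosh (p 0) ^ 3 :=
    pd_zero_comp_apply_zero (hasDerivAt_one_div_cosh_sq _)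
  have hk1 : pd 1 modelk p = 0 := pd_one_comp_apply_zero (fun x => 1 / cosh x ^ 2) p
  have hs : sinh (p 0) ≠ 0 := by simpa using hp
  have hc : cosh (p 0) ≠ 0 := (cosh_pos _).ne'
  have hhess := hess_diagMetric (E := fun x => cosh x ^ 4) (G := fun x => sinh x ^ 2)
    (E' := fun x => 4 * cosh x ^ 3 * sinh x) (G' := fun x => 2 * sinh x * cosh x)
    (u := fun x => 1 / cosh x ^ 2) (hasDerivAt_cosh_pow_four _)
    (hasDerivAt_sinh_sq _) (by positivity) (by positivity) (.of_forall hasDerivAt_one_div_cosh_sq)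
    (hasDerivAt_neg_two_mul_sinh_div_cosh_pow_three _) i j
  rw [← modelG_eq_diagMetric] at hhess
  refine hhess.trans ?_
  fin_cases i <;> fin_cases j <;>
    simp only [Fin.zero_eta, Fin.mk_one, Fin.isValue, Matrix.cons_val', Matrix.cons_val_zero,
      Matrix.cons_val_one, Matrix.cons_val_fin_one, Matrix.of_apply, modelk, modelG, hk0, hk1,
      mul_zero, zero_mul, sub_self] <;>
    field_simp <;> ring

/-- On the half-plane `x > 0`, the metric `g₁ = cosh⁴x dx² + sinh²x dy²` has Gauss curvature
`K = 1/cosh⁴x > 0` and `k = √K = 1/cosh²x` satisfies the Darboux-integrability tensor equation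
`(∇²k)ᵢⱼ = (5/(2k)) ∂ᵢk ∂ⱼk - 2k³ gᵢⱼ`. -/
theorem model_metric_check_13 :
    ∀ p : Pt, 0 < p 0 →
      gaussK modelG p = 1 / Real.cosh (p 0) ^ 4 ∧
      0 < gaussK modelG p ∧
      modelk p = Real.sqrt ( (gaussK modelG p)) ∧
      (∀ i j : Fin 2,
        hess modelG modelk i j p =
          (5 / (2 * modelk p)) * pd i modelk p * pd j modelk p
            - 2 * modelk p ^ 3 * modelG p i j) := by
  intro p hp
  have hK := gaussK_modelG hp.ne'
  refine ⟨hK, by rw [hK]; positivity, ?_, hess_modelG_modelk hp.ne'⟩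
  rw [hK, modelk, show (1 : ℝ) / cosh (p 0) ^ 4 = (1 / cosh (p 0) ^ 2) ^ 2 by ring,
    sqrt_sq (by positivity)]
end
end

section
/- On the open set D = {(x, φ, θ) ∈ ℝ³ : 0 < x < π/2, 0 < φ < π/2}, define the smooth real-valued functions A = sin θ cot x + cot φ, B = sin θ cot φ + cot x, C = cos θ. Then the 1-form α = A dx + B dφ + C dθ satisfies the Frobenius integrability condition α ∧ dα = 0 on D; explicitly, A(∂_φ C − ∂_θ B) + B(∂_θ A − ∂_x C) + C(∂_x B − ∂_φ A) = 0 identically on D. (This 1-form spans the terminal derived system of the characteristic system V₊ of the Monge–Ampère system encoding the Darboux equation for the metric g₄ = (cos⁴x)dx² + (sin²x)dy².) -/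
/-!
With `a = cot x`, `b = cot φ`, `s = sin θ`, `c = cos θ` we have `A = s a + b`, `B = s b + a`,
`C = c`, and `cot' = -(1 + cot²)` gives `∂_θ A = c a`, `∂_θ B = c b`, `∂_x B = -(1 + a²)`,
`∂_φ A = -(1 + b²)`, `∂_φ C = ∂_x C = 0`. The Frobenius expression becomes the polynomial
`-c b (s a + b) + c a (s b + a) + c (b² - a²)`, which vanishes identically.
-/

noncomputable section
open Real

/-- Partial derivative `∂ᵢ` of a scalar function on `ℝ³` (coordinates `x = p 0`,
`φ = p 1`, `θ = p 2`). -/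
def pd3 (i : Fin 3) (f : (Fin 3 → ℝ) → ℝ) : (Fin 3 → ℝ) → ℝ :=
  fun p => fderiv ℝ f p (Pi.single i 1)

/-- `A = sin θ cot x + cot φ`. -/
def Afun : (Fin 3 → ℝ) → ℝ :=
  fun p => Real.sin (p 2) * (Real.cos (p 0) / Real.sin (p 0))
    + Real.cos (p 1) / Real.sin (p 1)

/-- `B = sin θ cot φ + cot x`. -/
def Bfun : (Fin 3 → ℝ) → ℝ :=
  fun p => Real.sin (p 2) * (Real.cos (p 1) / Real.sin (p 1))
    + Real.cos (p 0) / Real.sin (p 0)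

/-- `C = cos θ`. -/
def Cfun : (Fin 3 → ℝ) → ℝ :=
  fun p => Real.cos (p 2)

theorem hasFDerivAt_comp_apply {ι : Type*} [Fintype ι] {g : ℝ → ℝ} {g' : ℝ} {p : ι → ℝ}
    (i : ι) (hg : HasDerivAt g g' (p i)) :
    HasFDerivAt (fun q : ι → ℝ => g (q i))
      (g' • ContinuousLinearMap.proj (R := ℝ) (φ := fun _ : ι => ℝ) i) p :=
  hg.comp_hasFDerivAt p (hasFDerivAt_apply i p)

theorem Real.hasDerivAt_cos_div_sin {x : ℝ} (hx : sin x ≠ 0) :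
    HasDerivAt (fun t => cos t / sin t) (-(1 + (cos x / sin x) ^ 2)) x := by
  refine ((hasDerivAt_cos x).div (hasDerivAt_sin x) hx).congr_deriv ?_
  field_simp
  ring

theorem HasFDerivAt.pd3_eq {f : (Fin 3 → ℝ) → ℝ} {f' : (Fin 3 → ℝ) →L[ℝ] ℝ}
    {p : Fin 3 → ℝ} (h : HasFDerivAt f f' p) (i : Fin 3) : pd3 i f p = f' (Pi.single i 1) := by
  rw [pd3, h.fderiv]

section

variable {p : Fin 3 → ℝ}

local notation "proj" => ContinuousLinearMap.proj (R := ℝ) (φ := fun _ : Fin 3 => ℝ)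

theorem hasFDerivAt_Afun (h₀ : sin (p 0) ≠ 0) (h₁ : sin (p 1) ≠ 0) :
    HasFDerivAt Afun
      ((sin (p 2) • (-(1 + (cos (p 0) / sin (p 0)) ^ 2)) • proj 0
          + (cos (p 0) / sin (p 0)) • cos (p 2) • proj 2)
        + (-(1 + (cos (p 1) / sin (p 1)) ^ 2)) • proj 1) p :=
  ((hasFDerivAt_comp_apply 2 (hasDerivAt_sin _)).mul
      (hasFDerivAt_comp_apply 0 (hasDerivAt_cos_div_sin h₀))).add
    (hasFDerivAt_comp_apply 1 (hasDerivAt_cos_div_sin h₁))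

theorem hasFDerivAt_Bfun (h₀ : sin (p 0) ≠ 0) (h₁ : sin (p 1) ≠ 0) :
    HasFDerivAt Bfun
      ((sin (p 2) • (-(1 + (cos (p 1) / sin (p 1)) ^ 2)) • proj 1
          + (cos (p 1) / sin (p 1)) • cos (p 2) • proj 2)
        + (-(1 + (cos (p 0) / sin (p 0)) ^ 2)) • proj 0) p :=
  ((hasFDerivAt_comp_apply 2 (hasDerivAt_sin _)).mul
      (hasFDerivAt_comp_apply 1 (hasDerivAt_cos_div_sin h₁))).add
    (hasFDerivAt_comp_apply 0 (hasDerivAt_cos_div_sin h₀))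

theorem hasFDerivAt_Cfun : HasFDerivAt Cfun ((-sin (p 2)) • proj 2) p :=
  hasFDerivAt_comp_apply 2 (hasDerivAt_cos _)

end

/-- On `D = {0 < x < π/2, 0 < φ < π/2}`, the 1-form `α = A dx + B dφ + C dθ` with
`A = sin θ cot x + cot φ`, `B = sin θ cot φ + cot x`, `C = cos θ` satisfies the Frobenius
condition `α ∧ dα = 0`, expressed by the scalar identity
`A(∂_φ C − ∂_θ B) + B(∂_θ A − ∂_x C) + C(∂_x B − ∂_φ A) = 0`.
(This 1-form spans the terminal derived system of the characteristic system `V₊` for the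
Darboux equation of the metric `g₄ = cos⁴x dx² + sin²x dy²`.) -/
theorem frobenius_terminal_derived_system_g4 :
    ∀ p : Fin 3 → ℝ, 0 < p 0 → p 0 < Real.pi / 2 → 0 < p 1 → p 1 < Real.pi / 2 →
      Afun p * (pd3 1 Cfun p - pd3 2 Bfun p)
        + Bfun p * (pd3 2 Afun p - pd3 0 Cfun p)
        + Cfun p * (pd3 0 Bfun p - pd3 1 Afun p) = 0 := by
  intro p hx₀ hx₁ hφ₀ hφ₁
  have h₀ : sin (p 0) ≠ 0 := (sin_pos_of_pos_of_lt_pi hx₀ (by linarith [pi_pos])).ne'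
  have h₁ : sin (p 1) ≠ 0 := (sin_pos_of_pos_of_lt_pi hφ₀ (by linarith [pi_pos])).ne'
  simp only [(hasFDerivAt_Afun h₀ h₁).pd3_eq, (hasFDerivAt_Bfun h₀ h₁).pd3_eq,
    hasFDerivAt_Cfun.pd3_eq]
  simp only [add_apply, smul_apply, ContinuousLinearMap.proj_apply, smul_eq_mul,
    Pi.single_eq_same, ne_eq, Fin.reduceEq, not_false_eq_true, Pi.single_eq_of_ne, Afun, Bfun, Cfun]
  ring
end
end
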